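/- Let (B,W) be a coloring of the plane, and let a, b, c > 0 be reals satisfying the (possibly degenerate) triangle inequality. If the coloring contains an (a,a,a)-triangle, then it contains an (a,b,c)-triangle. -/

import Mathlib

/-- A set of three points is monochromatic for the coloring `(B, Bᶜ)`:
all three points are black (in `B`) or all three are white (in `Bᶜ`). -/
def Mono (B : Set (EuclideanSpace ℝ (Fin 2))) (X Y Z : EuclideanSpace ℝ (Fin 2)) : Prop :=
  (X ∈ B ∧ Y ∈ B ∧ Z ∈ B) ∨ (X ∉ B ∧ Y ∉ B ∧ Z ∉ B)

/-- The coloring `(B, Bᶜ)` contains an `(a,b,c)`-triangle. -/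
def ContainsTriangle (B : Set (EuclideanSpace ℝ (Fin 2))) (a b c : ℝ) : Prop :=
  ∃ X Y Z : EuclideanSpace ℝ (Fin 2),
    Mono B X Y Z ∧ dist X Y = a ∧ dist Y Z = b ∧ dist Z X = c

/-!
Let `w` be the apex of an `(a,b,c)`-triangle erected on the segment `[0, a]` of `ℂ`, and put
`apex U V = U + (w / a) (V - U)`, so that `U, V, apex U V` is an `(a,b,c)`-triangle whenever
`|UV| = a`. Suppose `X, Y, Z` is a black equilateral triangle of side `a` and there is no
monochromatic `(a,b,c)`-triangle. Then `P = apex X Y`, `Q = apex Z X` and `R = apex Z Y` are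
white. Because `apex` is affine, `R = P + Q - X`, so the point reflection `σ z = P + Q - z`
swaps `X ↔ R` and `P ↔ Q`. Applying `σ` to the triangles `Z X Q` and `X Y P`
shows that `σ Z` and `σ Y` complete the white pairs `R P` and `R Q` to `(a,b,c)`-triangles,
hence are black; but then the image `σ Z, σ Y, X` of the triangle `Z Y R` is a black
`(a,b,c)`-triangle.
-/

def IsTriangle {α : Type*} [Dist α] (a b c : ℝ) (P Q R : α) : Prop :=
  dist P Q = a ∧ dist Q R = b ∧ dist R P = c

section Normed

variable {E : Type*} [SeminormedAddCommGroup E] {a b c : ℝ}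

theorem IsTriangle.sub_left {P Q R : E} (h : IsTriangle a b c P Q R) (O : E) :
    IsTriangle a b c (O - P) (O - Q) (O - R) := by
  simpa only [IsTriangle, dist_sub_left] using h

def ErectsTriangle (T : E →+ E) (a b c : ℝ) : Prop :=
  ∀ v : E, ‖v‖ = a → ‖v - T v‖ = b ∧ ‖T v‖ = c

theorem ErectsTriangle.isTriangle {T : E →+ E} (hT : ErectsTriangle T a b c) {U V : E}
    (h : dist U V = a) : IsTriangle a b c U V (U + T (V - U)) := by
  obtain ⟨hb, hc⟩ := hT (V - U) (by rw [← dist_eq_norm, dist_comm, h])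
  refine ⟨h, ?_, ?_⟩
  · rw [dist_eq_norm, ← hb, sub_add_eq_sub_sub]
  · rw [dist_eq_norm, add_sub_cancel_left, hc]

theorem exists_sameColor_triangle_of_equilateral {T : E →+ E} (hT : ErectsTriangle T a b c)
    (B : Set E) {X Y Z : E} (hXYZ : IsTriangle a a a X Y Z)
    (hcolor : (X ∈ B ↔ Y ∈ B) ∧ (Y ∈ B ↔ Z ∈ B)) :
    ∃ P Q R : E, IsTriangle a b c P Q R ∧ (P ∈ B ↔ Q ∈ B) ∧ (Q ∈ B ↔ R ∈ B) := by
  obtain ⟨hXY, hYZ, hZX⟩ := hXYZ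
  by_contra hmono
  have hfree (P Q R : E) (h : IsTriangle a b c P Q R) (hPQ : P ∈ B ↔ Q ∈ B) :
      ¬(Q ∈ B ↔ R ∈ B) := fun hQR => hmono ⟨P, Q, R, h, hPQ, hQR⟩
  set P := X + T (Y - X)
  set Q := Z + T (X - Z)
  have hP : IsTriangle a b c X Y P := hT.isTriangle hXY
  have hQ : IsTriangle a b c Z X Q := hT.isTriangle hZX
  have hR : IsTriangle a b c Z Y (P + Q - X) := by
    convert hT.isTriangle (dist_comm Y Z ▸ hYZ) using 1
    simp only [P, Q, map_sub]
    abel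
  have hσQ : IsTriangle a b c (P + Q - Z) (P + Q - X) P := by
    simpa only [add_sub_cancel_right] using hQ.sub_left (P + Q)
  have hσP : IsTriangle a b c (P + Q - X) (P + Q - Y) Q := by
    simpa only [add_sub_cancel_left] using hP.sub_left (P + Q)
  have hσR : IsTriangle a b c (P + Q - Z) (P + Q - Y) X := by
    simpa only [sub_sub_cancel] using hR.sub_left (P + Q)
  have hPw : ¬(Y ∈ B ↔ P ∈ B) := hfree _ _ _ hP hcolor.1
  have hQw : ¬(X ∈ B ↔ Q ∈ B) := hfree _ _ _ hQ (hcolor.1.trans hcolor.2).symm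
  have hRw : ¬(Y ∈ B ↔ P + Q - X ∈ B) := hfree _ _ _ hR hcolor.2.symm
  have hσZ : P + Q - Z ∈ B ↔ Y ∈ B := by
    have := hfree _ _ _ hσQ
    tauto
  have hσY : P + Q - Y ∈ B ↔ X ∈ B := by
    have := hfree _ _ _ hσP
    tauto
  exact hfree _ _ _ hσR (hσZ.trans (hcolor.1.symm.trans hσY.symm)) hσY

end Normed

theorem Complex.exists_norm_eq_and_norm_ofReal_sub_eq {a b c : ℝ} (ha : 0 < a)
    (h₁ : a ≤ b + c) (h₂ : b ≤ a + c) (h₃ : c ≤ a + b) :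
    ∃ w : ℂ, ‖w‖ = c ∧ ‖(a : ℂ) - w‖ = b := by
  set x := (a ^ 2 + c ^ 2 - b ^ 2) / (2 * a)
  have hx : 2 * a * x = a ^ 2 + c ^ 2 - b ^ 2 := by
    simp only [x]
    field_simp
  have heron : (2 * a) ^ 2 * (c ^ 2 - x ^ 2) = (b ^ 2 - (a - c) ^ 2) * ((a + c) ^ 2 - b ^ 2) := by
    linear_combination (-(2 * a * x + (a ^ 2 + c ^ 2 - b ^ 2))) * hx
  have hy : 0 ≤ c ^ 2 - x ^ 2 := by
    have hprod : 0 ≤ (b ^ 2 - (a - c) ^ 2) * ((a + c) ^ 2 - b ^ 2) := by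
      apply mul_nonneg <;> nlinarith
    rw [← heron] at hprod
    exact nonneg_of_mul_nonneg_right hprod (by positivity)
  refine ⟨⟨x, √(c ^ 2 - x ^ 2)⟩, ?_, ?_⟩
  · rw [Complex.norm_eq_sqrt_sq_add_sq, Real.sq_sqrt hy, add_sub_cancel,
      Real.sqrt_sq (by linarith)]
  · rw [Complex.norm_eq_sqrt_sq_add_sq]
    simp only [Complex.sub_re, Complex.sub_im, Complex.ofReal_re, Complex.ofReal_im, zero_sub,
      neg_sq, Real.sq_sqrt hy]
    rw [show (a - x) ^ 2 + (c ^ 2 - x ^ 2) = b ^ 2 by linear_combination -hx,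
      Real.sqrt_sq (by linarith)]

theorem exists_erectsTriangle_plane {a b c : ℝ} (ha : 0 < a)
    (h₁ : a ≤ b + c) (h₂ : b ≤ a + c) (h₃ : c ≤ a + b) :
    ∃ T : EuclideanSpace ℝ (Fin 2) →+ EuclideanSpace ℝ (Fin 2), ErectsTriangle T a b c := by
  obtain ⟨w, hwc, hwb⟩ := Complex.exists_norm_eq_and_norm_ofReal_sub_eq ha h₁ h₂ h₃
  let e := Complex.orthonormalBasisOneI.repr
  refine ⟨(e.toLinearEquiv.toLinearMap ∘ₗ LinearMap.mulLeft ℝ (w / a) ∘ₗ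
    e.symm.toLinearEquiv.toLinearMap).toAddMonoidHom, fun v hv => ?_⟩
  obtain ⟨z, rfl⟩ := e.surjective v
  rw [LinearIsometryEquiv.norm_map] at hv
  have ha' : (a : ℂ) ≠ 0 := Complex.ofReal_ne_zero.2 ha.ne'
  have hsub : z - w / a * z = (a - w) / a * z := by field_simp
  simp only [LinearMap.toAddMonoidHom_coe, LinearMap.coe_comp, Function.comp_apply,
    LinearMap.mulLeft_apply, LinearEquiv.coe_coe, LinearIsometryEquiv.coe_toLinearEquiv,
    LinearIsometryEquiv.symm_apply_apply, ← map_sub, LinearIsometryEquiv.norm_map, hsub]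
  rw [norm_mul, norm_mul, norm_div, norm_div, hv, hwc, hwb, Complex.norm_real,
    Real.norm_of_nonneg ha.le]
  constructor <;> field_simp

theorem mono_iff (B : Set (EuclideanSpace ℝ (Fin 2))) (X Y Z : EuclideanSpace ℝ (Fin 2)) :
    Mono B X Y Z ↔ (X ∈ B ↔ Y ∈ B) ∧ (Y ∈ B ↔ Z ∈ B) := by
  unfold Mono
  tauto

theorem stmt0 (B : Set (EuclideanSpace ℝ (Fin 2))) (a b c : ℝ)
    (ha : 0 < a)
    (h₁ : a ≤ b + c) (h₂ : b ≤ a + c) (h₃ : c ≤ a + b)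
    (h : ContainsTriangle B a a a) : ContainsTriangle B a b c := by
  obtain ⟨X, Y, Z, hmono, hXYZ⟩ := h
  obtain ⟨T, hT⟩ := exists_erectsTriangle_plane ha h₁ h₂ h₃
  obtain ⟨P, Q, R, hPQR, hcolor⟩ :=
    exists_sameColor_triangle_of_equilateral hT B hXYZ ((mono_iff B X Y Z).1 hmono)
  exact ⟨P, Q, R, (mono_iff B P Q R).2 hcolor, hPQR⟩
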